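/- arXiv:0706.1215 — 5 statements merged into one kernel-verified Lean document; each statement's English description precedes it below -/
import Mathlib

section
/- A tower of rings C → B → A is right depth three (i.e., A ⊗_B A is isomorphic as A-C-bimodule to a direct summand of A^N for some N) if and only if there exist finitely many elements γ_i ∈ End_B A_C and u_i ∈ (A ⊗_B A)^C such that x ⊗_B y = Σ_i x γ_i(y) u_i for all x, y ∈ A. -/
open scoped BigOperators

section BTCore

variable {R M N P : Type*} [AddCommGroup M] [AddCommGroup N] [AddCommGroup P]

/-- Relations defining the balanced tensor product of `M` and `N` over the
"scalars" `R`, where `R` acts on the right of `M` via `rho` and on the left of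
`N` via `lam`. -/
inductive BTRel (rho : R → M →+ M) (lam : R → N →+ N) :
    FreeAbelianGroup (M × N) → FreeAbelianGroup (M × N) → Prop
  | addl (m m' : M) (n : N) :
      BTRel rho lam (FreeAbelianGroup.of (m + m', n))
        (FreeAbelianGroup.of (m, n) + FreeAbelianGroup.of (m', n))
  | addr (m : M) (n n' : N) :
      BTRel rho lam (FreeAbelianGroup.of (m, n + n'))
        (FreeAbelianGroup.of (m, n) + FreeAbelianGroup.of (m, n'))
  | bal (r : R) (m : M) (n : N) :
      BTRel rho lam (FreeAbelianGroup.of (rho r m, n))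
        (FreeAbelianGroup.of (m, lam r n))

/-- The balanced tensor product `M ⊗_R N`. -/
def BT (rho : R → M →+ M) (lam : R → N →+ N) : Type _ :=
  (addConGen (BTRel rho lam)).Quotient

namespace BT

variable {rho : R → M →+ M} {lam : R → N →+ N}

instance : AddGroup (BT rho lam) :=
  inferInstanceAs (AddGroup (addConGen (BTRel rho lam)).Quotient)

instance : AddCommGroup (BT rho lam) :=
  { (inferInstance : AddGroup (BT rho lam)) with
    add_comm := fun a b => by
      refine AddCon.induction_on₂ a b fun x y => ?_
      change ((x + y : FreeAbelianGroup (M × N)) :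
        (addConGen (BTRel rho lam)).Quotient) = ((y + x : FreeAbelianGroup (M × N)) : _)
      rw [add_comm] }

/-- The canonical generator `m ⊗ n`. -/
def mk (rho : R → M →+ M) (lam : R → N →+ N) (m : M) (n : N) : BT rho lam :=
  ((FreeAbelianGroup.of (m, n) : FreeAbelianGroup (M × N)) :
    (addConGen (BTRel rho lam)).Quotient)

lemma mk_rel {x y : FreeAbelianGroup (M × N)} (h : BTRel rho lam x y) :
    (x : (addConGen (BTRel rho lam)).Quotient) = (y : _) :=
  (AddCon.eq _).2 (AddConGen.Rel.of _ _ h)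

lemma mk_add_left (m m' : M) (n : N) :
    mk rho lam (m + m') n = mk rho lam m n + mk rho lam m' n := by
  have := mk_rel (BTRel.addl m m' n (rho := rho) (lam := lam))
  exact this

lemma mk_add_right (m : M) (n n' : N) :
    mk rho lam m (n + n') = mk rho lam m n + mk rho lam m n' := by
  have := mk_rel (BTRel.addr m n n' (rho := rho) (lam := lam))
  exact this

lemma mk_bal (r : R) (m : M) (n : N) :
    mk rho lam (rho r m) n = mk rho lam m (lam r n) :=
  mk_rel (BTRel.bal r m n)

/-- Lift a biadditive balanced map to the balanced tensor product. -/
def lift (rho : R → M →+ M) (lam : R → N →+ N) (φ : M → N → P)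
    (h1 : ∀ m m' n, φ (m + m') n = φ m n + φ m' n)
    (h2 : ∀ m n n', φ m (n + n') = φ m n + φ m n')
    (h3 : ∀ r m n, φ (rho r m) n = φ m (lam r n)) : BT rho lam →+ P :=
  AddCon.lift _ (FreeAbelianGroup.lift fun p => φ p.1 p.2)
    (AddCon.addConGen_le.2 (by
      rintro x y h
      cases h with
      | addl m m' n => simp [AddCon.ker_rel, FreeAbelianGroup.lift_apply_of, h1]
      | addr m n n' => simp [AddCon.ker_rel, FreeAbelianGroup.lift_apply_of, h2]
      | bal r m n => simp [AddCon.ker_rel, FreeAbelianGroup.lift_apply_of, h3]))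

@[simp] lemma lift_mk (φ : M → N → P) (h1 h2 h3) (m : M) (n : N) :
    lift rho lam φ h1 h2 h3 (mk rho lam m n) = φ m n := by
  show (addConGen (BTRel rho lam)).lift _ _ ((FreeAbelianGroup.of (m, n) :
    FreeAbelianGroup (M × N)) : (addConGen (BTRel rho lam)).Quotient) = _
  rw [AddCon.lift_coe, FreeAbelianGroup.lift_apply_of]

/-- Induction principle for the balanced tensor product. -/
protected lemma ind {motive : BT rho lam → Prop} (zero : motive 0)
    (mk' : ∀ m n, motive (mk rho lam m n)) (neg : ∀ x, motive x → motive (-x))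
    (add : ∀ x y, motive x → motive y → motive (x + y)) : ∀ x : BT rho lam, motive x := by
  intro x
  refine AddCon.induction_on x fun z => ?_
  induction z using FreeAbelianGroup.induction_on with
  | zero => exact zero
  | of p => exact mk' p.1 p.2
  | neg p h =>
      have : ((-FreeAbelianGroup.of p : FreeAbelianGroup (M × N)) :
          (addConGen (BTRel rho lam)).Quotient) = -(mk rho lam p.1 p.2) := rfl
      rw [this]; exact neg _ (mk' p.1 p.2)
  | add x y hx hy =>
      have : ((x + y : FreeAbelianGroup (M × N)) :
          (addConGen (BTRel rho lam)).Quotient) = (x : _) + (y : _) := rfl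
      rw [this]; exact add _ _ hx hy

lemma hom_ext {f g : BT rho lam →+ P}
    (h : ∀ m n, f (mk rho lam m n) = g (mk rho lam m n)) : f = g := by
  ext x
  refine BT.ind (motive := fun x => f x = g x) ?_ ?_ ?_ ?_ x
  · simp
  · exact h
  · intro y hy; simp [hy]
  · intro y z hy hz; simp [hy, hz]

end BT

end BTCore

section Tensor

variable {B A C P : Type*} [Ring B] [Ring A] [Ring C] [AddCommGroup P]

/-- The tensor product `A ⊗_B A` relative to a ring homomorphism `g : B →+* A`. -/
def Tsr (g : B →+* A) : Type _ :=
  BT (fun b => AddMonoidHom.mulRight (g b)) (fun b => AddMonoidHom.mulLeft (g b))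

instance (g : B →+* A) : AddCommGroup (Tsr g) := inferInstanceAs (AddCommGroup (BT _ _))

namespace Tsr

variable (g : B →+* A)

/-- The generator `x ⊗_B y` of `Tsr g`. -/
def tmk (x y : A) : Tsr g := BT.mk _ _ x y

lemma tmk_add_left (x x' y : A) : tmk g (x + x') y = tmk g x y + tmk g x' y :=
  BT.mk_add_left x x' y

lemma tmk_add_right (x y y' : A) : tmk g x (y + y') = tmk g x y + tmk g x y' :=
  BT.mk_add_right x y y'

lemma tmk_bal (x : A) (b : B) (y : A) : tmk g (x * g b) y = tmk g x (g b * y) :=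
  BT.mk_bal b x y

/-- Lift a biadditive `B`-balanced map `A × A → P` to `Tsr g`. -/
def tlift (φ : A → A → P)
    (h1 : ∀ x x' y, φ (x + x') y = φ x y + φ x' y)
    (h2 : ∀ x y y', φ x (y + y') = φ x y + φ x y')
    (h3 : ∀ x b y, φ (x * g b) y = φ x (g b * y)) : Tsr g →+ P :=
  BT.lift _ _ φ h1 h2 (fun r m n => h3 m r n)

@[simp] lemma tlift_mk (φ : A → A → P) (h1 h2 h3) (x y : A) :
    tlift g φ h1 h2 h3 (tmk g x y) = φ x y :=
  BT.lift_mk φ h1 h2 _ x y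

lemma thom_ext {g : B →+* A} {f f' : Tsr g →+ P}
    (h : ∀ x y, f (tmk g x y) = f' (tmk g x y)) : f = f' :=
  BT.hom_ext h

/-- Left multiplication by `a ∈ A` on the first tensorand. -/
def lmul (a : A) : Tsr g →+ Tsr g :=
  tlift g (fun x y => tmk g (a * x) y)
    (fun x x' y => by rw [mul_add, tmk_add_left])
    (fun x y y' => by rw [tmk_add_right])
    (fun x b y => by rw [← mul_assoc, tmk_bal])

@[simp] lemma lmul_mk (a x y : A) : lmul g a (tmk g x y) = tmk g (a * x) y :=
  tlift_mk g _ _ _ _ x y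

/-- Right multiplication by `a ∈ A` on the second tensorand. -/
def rmul (a : A) : Tsr g →+ Tsr g :=
  tlift g (fun x y => tmk g x (y * a))
    (fun x x' y => by rw [tmk_add_left])
    (fun x y y' => by rw [add_mul, tmk_add_right])
    (fun x b y => by rw [tmk_bal, mul_assoc])

@[simp] lemma rmul_mk (a x y : A) : rmul g a (tmk g x y) = tmk g x (y * a) :=
  tlift_mk g _ _ _ _ x y

lemma lmul_lmul (a a' : A) (p : Tsr g) : lmul g a (lmul g a' p) = lmul g (a * a') p := by
  have : ((lmul g a).comp (lmul g a')) = lmul g (a * a') :=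
    thom_ext fun x y => by simp [mul_assoc]
  exact DFunLike.congr_fun this p

lemma rmul_rmul (a a' : A) (p : Tsr g) : rmul g a (rmul g a' p) = rmul g (a' * a) p := by
  have : ((rmul g a).comp (rmul g a')) = rmul g (a' * a) :=
    thom_ext fun x y => by simp [mul_assoc]
  exact DFunLike.congr_fun this p

lemma lmul_rmul (a a' : A) (p : Tsr g) : lmul g a (rmul g a' p) = rmul g a' (lmul g a p) := by
  have : ((lmul g a).comp (rmul g a')) = (rmul g a').comp (lmul g a) :=
    thom_ext fun x y => by simp
  exact DFunLike.congr_fun this p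

lemma lmul_add_smul (a a' : A) (p : Tsr g) :
    lmul g (a + a') p = lmul g a p + lmul g a' p := by
  have : lmul g (a + a') = lmul g a + lmul g a' :=
    thom_ext fun x y => by simp [add_mul, tmk_add_left]
  rw [this]; rfl

lemma rmul_add_smul (a a' : A) (p : Tsr g) :
    rmul g (a + a') p = rmul g a p + rmul g a' p := by
  have : rmul g (a + a') = rmul g a + rmul g a' :=
    thom_ext fun x y => by simp [mul_add, tmk_add_right]
  rw [this]; rfl

/-- The multiplication map `μ : A ⊗_B A → A`. -/
def mulmap : Tsr g →+ A :=
  tlift g (fun x y => x * y) (fun x x' y => by rw [add_mul])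
    (fun x y y' => by rw [mul_add]) (fun x b y => by rw [mul_assoc])

@[simp] lemma mulmap_mk (x y : A) : mulmap g (tmk g x y) = x * y := tlift_mk g _ _ _ _ x y

end Tsr

section TowerDefs

open Tsr

variable (g : B →+* A) (hC : C →+* A)

/-- `p ∈ (A ⊗_B A)^C` : the `C`-centralizer condition, where `C` maps to `A` via `hC`. -/
def TCent (p : Tsr g) : Prop := ∀ c : C, lmul g (hC c) p = rmul g (hC c) p

/-- `α ∈ End_B A_C` : additive endomorphisms of `A` that are left `B`-linear
(via `g`) and right `C`-linear (via `hC`). -/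
def EndBAC (α : A →+ A) : Prop :=
  (∀ (b : B) (x : A), α (g b * x) = g b * α x) ∧
  ∀ (x : A) (c : C), α (x * hC c) = α x * hC c

/-- The tower is right depth three: `A ⊗_B A` is isomorphic, as `A`-`C`-bimodules,
to a direct summand of `A^n` for some `n`. Here the left `A`-action and right
`C`-action on `A^n` are componentwise, and on `Tsr g` they are `lmul` and `rmul`. -/
def IsRightD3 : Prop :=
  ∃ (n : ℕ) (π : (Fin n → A) →+ Tsr g) (σ : Tsr g →+ (Fin n → A)),
    (∀ (a : A) (v : Fin n → A), π (fun i => a * v i) = lmul g a (π v)) ∧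
    (∀ (c : C) (v : Fin n → A), π (fun i => v i * hC c) = rmul g (hC c) (π v)) ∧
    (∀ (a : A) (p : Tsr g) (i : Fin n), σ (lmul g a p) i = a * σ p i) ∧
    (∀ (c : C) (p : Tsr g) (i : Fin n), σ (rmul g (hC c) p) i = σ p i * hC c) ∧
    (∀ p : Tsr g, π (σ p) = p)

end TowerDefs

end Tensor

open Tsr

/-! A splitting `π ∘ σ = id` of `A ⊗_B A` off `A^n` yields `γ_i(y) = σ(1 ⊗ y)_i` and
`u_i = π(e_i)`: left `A`-linearity of `π` expands `x ⊗ y = x · π(σ(1 ⊗ y))` as `∑ x γ_i(y) u_i`.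
Conversely `π(v) = ∑ v_i u_i` and `σ(x ⊗ y) = (x γ_i(y))_i` are `A`-`C`-bimodule maps (`σ` is
well defined since the `γ_i` are left `B`-linear, `π` is right `C`-linear since the `u_i` are
`C`-central), and the quasibasis identity says exactly that `π ∘ σ = id`. -/

namespace Tsr

variable {B A C : Type*} [Ring B] [Ring A] [Ring C] (g : B →+* A)

def tmkRight (x : A) : A →+ Tsr g := AddMonoidHom.mk' (tmk g x) (tmk_add_right g x)

lemma lmul_tmk_one (x y : A) : lmul g x (tmk g 1 y) = tmk g x y := by
  rw [lmul_mk, mul_one]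

lemma tmk_one_mul (b : B) (y : A) : tmk g 1 (g b * y) = lmul g (g b) (tmk g 1 y) := by
  rw [lmul_mk, mul_one, ← one_mul (g b), tmk_bal, one_mul]

variable {g} {ι : Type*}

section Splitting

variable [DecidableEq ι] {hC : C →+* A} {π : (ι → A) →+ Tsr g}

lemma eq_sum_lmul_single [Fintype ι]
    (hπ : ∀ (a : A) (v : ι → A), π (fun i => a * v i) = lmul g a (π v)) (v : ι → A) :
    π v = ∑ i, lmul g (v i) (π (Pi.single i 1)) := by
  conv_lhs => rw [← Finset.univ_sum_single v]
  rw [map_sum]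
  refine Finset.sum_congr rfl fun i _ => ?_
  rw [← hπ]
  congr 1
  funext j
  by_cases hij : j = i <;> simp [hij]

lemma tcent_single_one (hπl : ∀ (a : A) (v : ι → A), π (fun i => a * v i) = lmul g a (π v))
    (hπr : ∀ (c : C) (v : ι → A), π (fun i => v i * hC c) = rmul g (hC c) (π v)) (i : ι) :
    TCent g hC (π (Pi.single i 1)) := by
  intro c
  rw [← hπl, ← hπr]
  congr 1
  funext j
  by_cases hij : j = i <;> simp [hij]

end Splitting

/-- The endomorphisms `γ_i(y) = σ(1 ⊗ y)_i` of a depth-three splitting `π ∘ σ = id`. -/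
def coordOfOneTmk (σ : Tsr g →+ (ι → A)) (i : ι) : A →+ A :=
  (Pi.evalAddMonoidHom (fun _ => A) i).comp (σ.comp (tmkRight g 1))

lemma endBAC_coordOfOneTmk {hC : C →+* A} {σ : Tsr g →+ (ι → A)}
    (hσl : ∀ (a : A) (p : Tsr g) (i : ι), σ (lmul g a p) i = a * σ p i)
    (hσr : ∀ (c : C) (p : Tsr g) (i : ι), σ (rmul g (hC c) p) i = σ p i * hC c) (i : ι) :
    EndBAC g hC (coordOfOneTmk σ i) := by
  refine ⟨fun b x => ?_, fun x c => ?_⟩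
  · change σ (tmk g 1 (g b * x)) i = g b * σ (tmk g 1 x) i
    rw [tmk_one_mul, hσl]
  · change σ (tmk g 1 (x * hC c)) i = σ (tmk g 1 x) i * hC c
    rw [← hσr, rmul_mk]

def sumLmul [Fintype ι] (u : ι → Tsr g) : (ι → A) →+ Tsr g :=
  AddMonoidHom.mk' (fun v => ∑ i, lmul g (v i) (u i)) fun v w => by
    simp only [Pi.add_apply, lmul_add_smul, Finset.sum_add_distrib]

lemma sumLmul_apply [Fintype ι] (u : ι → Tsr g) (v : ι → A) :
    sumLmul u v = ∑ i, lmul g (v i) (u i) :=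
  rfl

lemma sumLmul_mul_left [Fintype ι] (u : ι → Tsr g) (a : A) (v : ι → A) :
    sumLmul u (fun i => a * v i) = lmul g a (sumLmul u v) := by
  simp only [sumLmul_apply, map_sum, lmul_lmul]

lemma sumLmul_mul_right [Fintype ι] {hC : C →+* A} {u : ι → Tsr g} (hu : ∀ i, TCent g hC (u i))
    (c : C) (v : ι → A) : sumLmul u (fun i => v i * hC c) = rmul g (hC c) (sumLmul u v) := by
  simp only [sumLmul_apply, map_sum, ← lmul_lmul, hu _ c, lmul_rmul]

def quasiCoord (γ : ι → A →+ A) (hγ : ∀ i (b : B) (y : A), γ i (g b * y) = g b * γ i y) :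
    Tsr g →+ (ι → A) :=
  tlift g (fun x y i => x * γ i y)
    (fun x x' y => funext fun i => add_mul x x' (γ i y))
    (fun x y y' => funext fun i => by simp only [map_add, mul_add, Pi.add_apply])
    (fun x b y => funext fun i => by rw [hγ, mul_assoc])

variable {γ : ι → A →+ A} {hγ : ∀ i (b : B) (y : A), γ i (g b * y) = g b * γ i y}

@[simp] lemma quasiCoord_tmk (x y : A) : quasiCoord γ hγ (tmk g x y) = fun i => x * γ i y :=
  tlift_mk g _ _ _ _ x y

lemma quasiCoord_lmul (a : A) (p : Tsr g) (i : ι) :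
    quasiCoord γ hγ (lmul g a p) i = a * quasiCoord γ hγ p i := by
  have : (Pi.evalAddMonoidHom _ i).comp ((quasiCoord γ hγ).comp (lmul g a)) =
      (AddMonoidHom.mulLeft a).comp ((Pi.evalAddMonoidHom _ i).comp (quasiCoord γ hγ)) :=
    thom_ext fun x y => by simp [mul_assoc]
  exact DFunLike.congr_fun this p

lemma quasiCoord_rmul (a : A) (hγa : ∀ i y, γ i (y * a) = γ i y * a) (p : Tsr g) (i : ι) :
    quasiCoord γ hγ (rmul g a p) i = quasiCoord γ hγ p i * a := by
  have : (Pi.evalAddMonoidHom _ i).comp ((quasiCoord γ hγ).comp (rmul g a)) =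
      (AddMonoidHom.mulRight a).comp ((Pi.evalAddMonoidHom _ i).comp (quasiCoord γ hγ)) :=
    thom_ext fun x y => by simp [hγa, mul_assoc]
  exact DFunLike.congr_fun this p

lemma sumLmul_quasiCoord [Fintype ι] {u : ι → Tsr g}
    (hq : ∀ x y : A, tmk g x y = ∑ i, lmul g (x * γ i y) (u i)) (p : Tsr g) :
    sumLmul u (quasiCoord γ hγ p) = p := by
  have : (sumLmul u).comp (quasiCoord γ hγ) = AddMonoidHom.id (Tsr g) :=
    thom_ext fun x y => by
      rw [AddMonoidHom.comp_apply, quasiCoord_tmk, sumLmul_apply, hq x y]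
      rfl
  exact DFunLike.congr_fun this p

end Tsr

section Quasibasis

variable {B A C : Type*} [Ring B] [Ring A] [Ring C] {g : B →+* A} {hC : C →+* A}

lemma IsRightD3.exists_quasibasis (h : IsRightD3 g hC) :
    ∃ (n : ℕ) (γ : Fin n → (A →+ A)) (u : Fin n → Tsr g),
      (∀ i, EndBAC g hC (γ i)) ∧ (∀ i, TCent g hC (u i)) ∧
      ∀ x y : A, tmk g x y = ∑ i, lmul g (x * γ i y) (u i) := by
  obtain ⟨n, π, σ, hπl, hπr, hσl, hσr, hπσ⟩ := h
  refine ⟨n, coordOfOneTmk σ, fun i => π (Pi.single i 1), endBAC_coordOfOneTmk hσl hσr,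
    tcent_single_one hπl hπr, fun x y => ?_⟩
  calc tmk g x y = lmul g x (π (σ (tmk g 1 y))) := by rw [hπσ, lmul_tmk_one]
    _ = ∑ i, lmul g (x * coordOfOneTmk σ i y) (π (Pi.single i 1)) := by
      rw [eq_sum_lmul_single hπl (σ _), map_sum]
      simp only [lmul_lmul]
      rfl

lemma isRightD3_of_quasibasis {n : ℕ} {γ : Fin n → (A →+ A)} {u : Fin n → Tsr g}
    (hγ : ∀ i, EndBAC g hC (γ i)) (hu : ∀ i, TCent g hC (u i))
    (hq : ∀ x y : A, tmk g x y = ∑ i, lmul g (x * γ i y) (u i)) : IsRightD3 g hC :=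
  ⟨n, sumLmul u, quasiCoord γ fun i => (hγ i).1, sumLmul_mul_left u, sumLmul_mul_right hu,
    quasiCoord_lmul, fun c => quasiCoord_rmul (hC c) fun i y => (hγ i).2 y c,
    sumLmul_quasiCoord hq⟩

end Quasibasis

/-- A tower of rings `C → B → A` is right depth three iff there are
finitely many `γ_i ∈ End_B A_C` and `u_i ∈ (A ⊗_B A)^C` satisfying
`x ⊗_B y = ∑ i, x γ_i(y) u_i` for all `x, y ∈ A`. -/
theorem isRightD3_iff_quasibases {C B A : Type*} [Ring C] [Ring B] [Ring A]
    (f : C →+* B) (g : B →+* A) :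
    IsRightD3 g (g.comp f) ↔
      ∃ (n : ℕ) (γ : Fin n → (A →+ A)) (u : Fin n → Tsr g),
        (∀ i, EndBAC g (g.comp f) (γ i)) ∧
        (∀ i, TCent g (g.comp f) (u i)) ∧
        ∀ x y : A, tmk g x y = ∑ i, lmul g (x * γ i y) (u i) :=
  ⟨IsRightD3.exists_quasibasis, fun ⟨_, _, _, hγ, hu, hq⟩ => isRightD3_of_quasibasis hγ hu hq⟩
end

section
/- Let A|B|C be a right depth three tower of rings with right D3 quasibases γ_i ∈ End_B A_C, u_i ∈ (A ⊗_B A)^C (i = 1,...,N). Then P = (A ⊗_B A)^C is a finitely generated projective left module over the centralizer V = A^C, where the left V-action is v · p = (v ⊗ 1) p, with dual bases given by u_i ∈ P and the V-linear functionals p ↦ p¹γ_i(p²). -/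
open scoped BigOperators

open Tsr

section Extra

open Tsr

variable {C B A : Type*} [Ring C] [Ring B] [Ring A] (f : C →+* B) (g : B →+* A)

/-- For `γ` left `B`-linear, the map `A ⊗_B A → A`, `p = p¹ ⊗ p² ↦ p¹ * γ p²`. -/
def phiMap (γ : A →+ A)
    (hγ : ∀ (b : B) (x : A), γ (g b * x) = g b * γ x) : Tsr g →+ A :=
  tlift g (fun x y => x * γ y)
    (fun x x' y => by rw [add_mul])
    (fun x y y' => by rw [map_add, mul_add])
    (fun x b y => by rw [hγ, mul_assoc])

/-- The centralizer `V = A^C` of the image of `C` in `A`. -/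
def Vc : Subring A := Subring.centralizer (Set.range ⇑(g.comp f))

lemma Vc_comm {v : A} (hv : v ∈ Vc f g) (c : C) :
    (g.comp f) c * v = v * (g.comp f) c :=
  Subring.mem_centralizer_iff.mp hv _ ⟨c, rfl⟩

/-- `P = (A ⊗_B A)^C` as an additive subgroup of `A ⊗_B A`. -/
def PCsub : AddSubgroup (Tsr g) where
  carrier := {p | TCent g (g.comp f) p}
  add_mem' := fun hp hq c => by simp only [map_add, hp c, hq c]
  zero_mem' := fun c => by simp
  neg_mem' := fun hp c => by simp only [map_neg, hp c]

lemma cent_lmul {v : A} (hv : ∀ c : C, (g.comp f) c * v = v * (g.comp f) c)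
    {p : Tsr g} (hp : TCent g (g.comp f) p) :
    TCent g (g.comp f) (lmul g v p) := fun c => by
  rw [lmul_lmul, hv c, ← lmul_lmul, hp c, lmul_rmul]

lemma cent_rmul {v : A} (hv : ∀ c : C, (g.comp f) c * v = v * (g.comp f) c)
    {p : Tsr g} (hp : TCent g (g.comp f) p) :
    TCent g (g.comp f) (rmul g v p) := fun c => by
  rw [lmul_rmul, hp c, rmul_rmul, hv c, ← rmul_rmul]

/-- The left action of `v ∈ V` on `P = (A ⊗_B A)^C`. -/
def smulL (v : Vc f g) : ↥(PCsub f g) →+ ↥(PCsub f g) :=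
  AddMonoidHom.mk' (fun p => ⟨lmul g (v : A) p.1, cent_lmul f g (Vc_comm f g v.2) p.2⟩)
    (fun p q => Subtype.ext (by simp))

/-- The right action of `v ∈ V` on `P = (A ⊗_B A)^C`. -/
def smulR (v : Vc f g) : ↥(PCsub f g) →+ ↥(PCsub f g) :=
  AddMonoidHom.mk' (fun p => ⟨rmul g (v : A) p.1, cent_rmul f g (Vc_comm f g v.2) p.2⟩)
    (fun p q => Subtype.ext (by simp))

end Extra

/-!
Each `φᵢ : p ↦ p¹ γᵢ(p²)` is left `A`-linear because `γᵢ` is left `B`-linear, and it maps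
`(A ⊗_B A)^C` into `V = A^C` because `γᵢ` is right `C`-linear: for `C`-central `p`,
`c · φᵢ(p) = φᵢ((c ⊗ 1) p) = φᵢ(p (1 ⊗ c)) = φᵢ(p) · c`. The dual basis identity
`p = Σᵢ φᵢ(p) · uᵢ` is the quasibase identity on simple tensors, and both sides are
additive in `p`.
-/

namespace Tsr

variable {B A : Type*} [Ring B] [Ring A] (g : B →+* A)

def lmulFlip (q : Tsr g) : A →+ Tsr g :=
  AddMonoidHom.mk' (fun a => lmul g a q) (fun a a' => lmul_add_smul g a a' q)

@[simp] lemma lmulFlip_apply (q : Tsr g) (a : A) : lmulFlip g q a = lmul g a q := rfl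

end Tsr

section PhiMap

variable {B A : Type*} [Ring B] [Ring A] (g : B →+* A) (γ : A →+ A)
  (hγ : ∀ (b : B) (x : A), γ (g b * x) = g b * γ x)

@[simp] lemma phiMap_tmk (x y : A) : phiMap g γ hγ (tmk g x y) = x * γ y :=
  tlift_mk g _ _ _ _ x y

lemma phiMap_lmul (a : A) (p : Tsr g) : phiMap g γ hγ (lmul g a p) = a * phiMap g γ hγ p := by
  have h : (phiMap g γ hγ).comp (lmul g a) = (AddMonoidHom.mulLeft a).comp (phiMap g γ hγ) :=
    thom_ext fun x y => by simp [mul_assoc]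
  exact DFunLike.congr_fun h p

lemma phiMap_rmul {c : A} (hc : ∀ x, γ (x * c) = γ x * c) (p : Tsr g) :
    phiMap g γ hγ (rmul g c p) = phiMap g γ hγ p * c := by
  have h : (phiMap g γ hγ).comp (rmul g c) = (AddMonoidHom.mulRight c).comp (phiMap g γ hγ) :=
    thom_ext fun x y => by simp [hc, mul_assoc]
  exact DFunLike.congr_fun h p

lemma commute_phiMap_of_tCent {C : Type*} [Ring C] {hC : C →+* A} (hγ : EndBAC g hC γ)
    {p : Tsr g} (hp : TCent g hC p) (c : C) : Commute (hC c) (phiMap g γ hγ.1 p) := by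
  rw [Commute, SemiconjBy, ← phiMap_lmul, hp c, phiMap_rmul g γ hγ.1 (fun x => hγ.2 x c)]

end PhiMap

lemma sum_lmul_phiMap {B A : Type*} [Ring B] [Ring A] (g : B →+* A) {ι : Type*} [Fintype ι]
    (γ : ι → A →+ A) (hγ : ∀ i (b : B) (x : A), γ i (g b * x) = g b * γ i x) (u : ι → Tsr g)
    (hqb : ∀ x y : A, tmk g x y = ∑ i, lmul g (x * γ i y) (u i)) (p : Tsr g) :
    ∑ i, lmul g (phiMap g (γ i) (hγ i) p) (u i) = p := by
  have h : ∑ i, (lmulFlip g (u i)).comp (phiMap g (γ i) (hγ i)) = AddMonoidHom.id (Tsr g) :=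
    thom_ext fun x y => by simp [← hqb]
  simpa [AddMonoidHom.finsetSum_apply] using DFunLike.congr_fun h p

theorem PC_finite_projective_general {C B A : Type*} [Ring C] [Ring B] [Ring A]
    (f : C →+* B) (g : B →+* A) (n : ℕ) (γ : Fin n → (A →+ A)) (u : Fin n → Tsr g)
    (hγ : ∀ i, EndBAC g (g.comp f) (γ i))
    (hqb : ∀ x y : A, tmk g x y = ∑ i, lmul g (x * γ i y) (u i)) :
    (∀ (i : Fin n) (p : Tsr g), TCent g (g.comp f) p →
        ∀ c : C, (g.comp f) c * phiMap g (γ i) (hγ i).1 p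
          = phiMap g (γ i) (hγ i).1 p * (g.comp f) c) ∧
    (∀ (i : Fin n) (v : A), (∀ c : C, (g.comp f) c * v = v * (g.comp f) c) →
        ∀ p : Tsr g, phiMap g (γ i) (hγ i).1 (lmul g v p)
          = v * phiMap g (γ i) (hγ i).1 p) ∧
    ∀ p : Tsr g, TCent g (g.comp f) p →
      p = ∑ i, lmul g (phiMap g (γ i) (hγ i).1 p) (u i) :=
  ⟨fun i _ hp c => (commute_phiMap_of_tCent g (γ i) (hγ i) hp c).eq,
    fun i v _ p => phiMap_lmul g (γ i) (hγ i).1 v p,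
    fun p _ => (sum_lmul_phiMap g γ (fun i => (hγ i).1) u hqb p).symm⟩

/-- Let `A|B|C` be a right depth three tower with rD3 quasibases
`γ_i ∈ End_B A_C`, `u_i ∈ (A ⊗_B A)^C`.  Then `P = (A ⊗_B A)^C` is a finitely
generated projective left module over the centralizer `V = A^C`, with dual bases
the `u_i` and the `V`-linear functionals `p ↦ p¹ γ_i(p²)` (which take values in `V`). -/
theorem PC_finite_projective {C B A : Type*} [Ring C] [Ring B] [Ring A]
    (f : C →+* B) (g : B →+* A) (n : ℕ) (γ : Fin n → (A →+ A)) (u : Fin n → Tsr g)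
    (hγ : ∀ i, EndBAC g (g.comp f) (γ i)) (hu : ∀ i, TCent g (g.comp f) (u i))
    (hqb : ∀ x y : A, tmk g x y = ∑ i, lmul g (x * γ i y) (u i)) :
    (∀ (i : Fin n) (p : Tsr g), TCent g (g.comp f) p →
        ∀ c : C, (g.comp f) c * phiMap g (γ i) (hγ i).1 p
          = phiMap g (γ i) (hγ i).1 p * (g.comp f) c) ∧
    (∀ (i : Fin n) (v : A), (∀ c : C, (g.comp f) c * v = v * (g.comp f) c) →
        ∀ p : Tsr g, phiMap g (γ i) (hγ i).1 (lmul g v p)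
          = v * phiMap g (γ i) (hγ i).1 p) ∧
    ∀ p : Tsr g, TCent g (g.comp f) p →
      p = ∑ i, lmul g (phiMap g (γ i) (hγ i).1 p) (u i) :=
  PC_finite_projective_general f g n γ u hγ hqb
end

section
/- Let A|B|C be a left depth three tower of rings with left D3 quasibases β_j ∈ End_C A_B and t_j ∈ (A ⊗_B A)^C satisfying x ⊗_B y = Σ_j t_j β_j(x) y for all x,y ∈ A. Then the map A ⊗_V End_C A_B → End A_B given by a ⊗ α ↦ λ_a ∘ α (left multiplication by a composed with α) is an isomorphism of abelian groups, with inverse f ↦ Σ_j f(t_j¹)t_j² ⊗_V β_j. -/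
open scoped BigOperators

open Tsr
section Smash

open Tsr

variable {C B A : Type*} [Ring C] [Ring B] [Ring A] (f : C →+* B) (g : B →+* A)

/-- `End A_B` : right `B`-linear additive endomorphisms of `A`. -/
def EBsub (g : B →+* A) : AddSubgroup (A →+ A) where
  carrier := {α | ∀ (x : A) (b : B), α (x * g b) = α x * g b}
  add_mem' := fun hα hα' x b => by
    simp only [AddMonoidHom.add_apply, hα x b, hα' x b, add_mul]
  zero_mem' := fun x b => by simp
  neg_mem' := fun hα x b => by
    simp only [AddMonoidHom.neg_apply, hα x b, neg_mul]

/-- `End_C A_B` : left `C`-linear, right `B`-linear additive endomorphisms of `A`. -/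
def ECBsub (f : C →+* B) (g : B →+* A) : AddSubgroup (A →+ A) where
  carrier := {α | (∀ (c : C) (x : A), α ((g.comp f) c * x) = (g.comp f) c * α x) ∧
    ∀ (x : A) (b : B), α (x * g b) = α x * g b}
  add_mem' := fun hα hα' =>
    ⟨fun c x => by simp only [AddMonoidHom.add_apply, hα.1 c x, hα'.1 c x, mul_add],
     fun x b => by simp only [AddMonoidHom.add_apply, hα.2 x b, hα'.2 x b, add_mul]⟩
  zero_mem' := ⟨fun c x => by simp, fun x b => by simp⟩
  neg_mem' := fun hα =>
    ⟨fun c x => by simp only [AddMonoidHom.neg_apply, hα.1 c x, mul_neg],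
     fun x b => by simp only [AddMonoidHom.neg_apply, hα.2 x b, neg_mul]⟩

/-- The left action of `v ∈ V` on `End_C A_B`. -/
def vE (v : Vc f g) : ↥(ECBsub f g) →+ ↥(ECBsub f g) :=
  AddMonoidHom.mk'
    (fun α => ⟨(AddMonoidHom.mulLeft (v : A)).comp α.1,
      ⟨fun c x => by
        simp only [AddMonoidHom.comp_apply, AddMonoidHom.coe_mulLeft, α.2.1 c x]
        rw [← mul_assoc, ← mul_assoc, Vc_comm f g v.2 c],
       fun x b => by
        simp only [AddMonoidHom.comp_apply, AddMonoidHom.coe_mulLeft, α.2.2 x b,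
          mul_assoc]⟩⟩)
    (fun α α' => Subtype.ext (by ext x; simp [mul_add]))

/-- The tensor product `A ⊗_V End_C A_B`. -/
abbrev AVE (f : C →+* B) (g : B →+* A) : Type _ :=
  BT (fun v : Vc f g => AddMonoidHom.mulRight (v : A)) (fun v : Vc f g => vE f g v)

/-- The map `A ⊗_V End_C A_B → End A_B`, `a ⊗ α ↦ λ_a ∘ α`. -/
def smashPhi : AVE f g →+ ↥(EBsub g) :=
  BT.lift _ _
    (fun a α => (⟨(AddMonoidHom.mulLeft a).comp α.1,
      fun x b => by
        simp only [AddMonoidHom.comp_apply, AddMonoidHom.coe_mulLeft, α.2.2 x b,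
          mul_assoc]⟩ : ↥(EBsub g)))
    (fun a a' α => Subtype.ext (by ext x; simp [add_mul]))
    (fun a α α' => Subtype.ext (by ext x; simp [mul_add]))
    (fun v a α => Subtype.ext (by ext x; simp [vE, mul_assoc]))

/-- For a right `B`-linear `F : A → A`, the map `A ⊗_B A → A`,
`t = t¹ ⊗ t² ↦ F(t¹) t²`. -/
def evMap (F : A →+ A) (hF : ∀ (x : A) (b : B), F (x * g b) = F x * g b) :
    Tsr g →+ A :=
  tlift g (fun x y => F x * y)
    (fun x x' y => by rw [map_add, add_mul])
    (fun x y y' => by rw [mul_add])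
    (fun x b y => by rw [hF, mul_assoc])

end Smash

/-! The inverse `F ↦ ∑ j F(t_j¹) t_j² ⊗ β_j` rests on the expansion `F x = ∑ j F(t_j¹) t_j² β_j(x)`,
obtained by applying `t ↦ F(t¹) t²` to the quasibase identity `x ⊗_B 1 = ∑ j t_j β_j(x)`. When
`F = λ_a ∘ α` with `α` left `C`-linear, each coefficient `α(t_j¹) t_j²` lies in `V = A^C` because
`t_j` is `C`-central, so it can be moved across `⊗_V`, giving `a ⊗ ∑ j α(t_j¹) t_j² β_j = a ⊗ α`. -/

lemma BT.mk_sum_right {R M N ι : Type*} [AddCommGroup M] [AddCommGroup N]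
    {rho : R → M →+ M} {lam : R → N →+ N} (m : M) (s : Finset ι) (v : ι → N) :
    BT.mk rho lam m (∑ j ∈ s, v j) = ∑ j ∈ s, BT.mk rho lam m (v j) :=
  map_sum (AddMonoidHom.mk' (BT.mk rho lam m) (BT.mk_add_right m)) v s

section EvMap

variable {B A : Type*} [Ring B] [Ring A] (g : B →+* A)

@[simp] lemma evMap_tmk (F : A →+ A) (hF : ∀ (x : A) (b : B), F (x * g b) = F x * g b)
    (x y : A) : evMap g F hF (tmk g x y) = F x * y :=
  tlift_mk g _ _ _ _ x y

lemma evMap_rmul (F : A →+ A) (hF : ∀ (x : A) (b : B), F (x * g b) = F x * g b)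
    (a : A) (p : Tsr g) : evMap g F hF (rmul g a p) = evMap g F hF p * a := by
  have h : (evMap g F hF).comp (rmul g a) = (AddMonoidHom.mulRight a).comp (evMap g F hF) :=
    thom_ext fun x y => by simp [mul_assoc]
  exact DFunLike.congr_fun h p

lemma evMap_lmul (F : A →+ A) (hF : ∀ (x : A) (b : B), F (x * g b) = F x * g b)
    {a : A} (ha : ∀ x, F (a * x) = a * F x) (p : Tsr g) :
    evMap g F hF (lmul g a p) = a * evMap g F hF p := by
  have h : (evMap g F hF).comp (lmul g a) = (AddMonoidHom.mulLeft a).comp (evMap g F hF) :=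
    thom_ext fun x y => by simp [ha, mul_assoc]
  exact DFunLike.congr_fun h p

lemma evMap_add (F G : A →+ A) (hF : ∀ (x : A) (b : B), F (x * g b) = F x * g b)
    (hG : ∀ (x : A) (b : B), G (x * g b) = G x * g b)
    (hFG : ∀ (x : A) (b : B), (F + G) (x * g b) = (F + G) x * g b) (p : Tsr g) :
    evMap g (F + G) hFG p = evMap g F hF p + evMap g G hG p := by
  have h : evMap g (F + G) hFG = evMap g F hF + evMap g G hG :=
    thom_ext fun x y => by simp [add_mul]
  exact DFunLike.congr_fun h p

lemma apply_eq_sum_evMap_mul {ι : Type*} [Fintype ι] (β : ι → (A →+ A)) (t : ι → Tsr g)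
    (hqb : ∀ x y : A, tmk g x y = ∑ j, rmul g (β j x * y) (t j))
    (F : A →+ A) (hF : ∀ (x : A) (b : B), F (x * g b) = F x * g b) (x : A) :
    F x = ∑ j, evMap g F hF (t j) * β j x := by
  simpa [evMap_rmul] using congrArg (evMap g F hF) (hqb x 1)

end EvMap

section SmashInverse

variable {C B A : Type*} [Ring C] [Ring B] [Ring A] {f : C →+* B} {g : B →+* A}

lemma evMap_mem_Vc {α : A →+ A} (hα : α ∈ ECBsub f g) {p : Tsr g}
    (hp : TCent g (g.comp f) p) : evMap g α hα.2 p ∈ Vc f g := by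
  rw [Vc, Subring.mem_centralizer_iff]
  rintro _ ⟨c, rfl⟩
  rw [← evMap_lmul g α hα.2 (hα.1 c), ← evMap_rmul, hp c]

lemma smashPhi_mk_apply (a : A) (α : ↥(ECBsub f g)) (x : A) :
    (smashPhi f g (BT.mk _ _ a α) : A →+ A) x = a * α.1 x := by
  simp [smashPhi]

lemma evMap_smashPhi_mk (a : A) (α : ↥(ECBsub f g)) (p : Tsr g) :
    evMap g (smashPhi f g (BT.mk _ _ a α)).1 (smashPhi f g (BT.mk _ _ a α)).2 p
      = a * evMap g α.1 α.2.2 p := by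
  have h : evMap g _ (smashPhi f g (BT.mk _ _ a α)).2
      = (AddMonoidHom.mulLeft a).comp (evMap g α.1 α.2.2) :=
    thom_ext fun x y => (evMap_tmk g _ _ x y).trans <| by
      rw [smashPhi_mk_apply, mul_assoc, AddMonoidHom.comp_apply, evMap_tmk,
        AddMonoidHom.coe_mulLeft]
  exact DFunLike.congr_fun h p

variable {ι : Type*} [Fintype ι] {β : ι → (A →+ A)} (hβ : ∀ j, β j ∈ ECBsub f g)
  (t : ι → Tsr g)

def smashPsi : ↥(EBsub g) →+ AVE f g :=
  AddMonoidHom.mk' (fun F => ∑ j, BT.mk _ _ (evMap g F.1 F.2 (t j)) ⟨β j, hβ j⟩)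
    (fun F G => by
      rw [← Finset.sum_add_distrib]
      refine Finset.sum_congr rfl fun j _ => ?_
      rw [← BT.mk_add_left, ← evMap_add g F.1 G.1 F.2 G.2 (F + G).2]
      rfl)

lemma smashPhi_smashPsi (hqb : ∀ x y : A, tmk g x y = ∑ j, rmul g (β j x * y) (t j))
    (F : ↥(EBsub g)) : smashPhi f g (smashPsi hβ t F) = F := by
  ext x
  simp only [smashPsi, AddMonoidHom.mk'_apply, map_sum, AddSubgroup.val_finsetSum,
    AddMonoidHom.finsetSum_apply, smashPhi_mk_apply]
  exact (apply_eq_sum_evMap_mul g β t hqb F.1 F.2 x).symm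

lemma smashPsi_smashPhi (ht : ∀ j, TCent g (g.comp f) (t j))
    (hqb : ∀ x y : A, tmk g x y = ∑ j, rmul g (β j x * y) (t j)) (z : AVE f g) :
    smashPsi hβ t (smashPhi f g z) = z := by
  suffices h : (smashPsi hβ t).comp (smashPhi f g) = AddMonoidHom.id _ from
    DFunLike.congr_fun h z
  refine BT.hom_ext fun a α => ?_
  let v : ι → Vc f g := fun j => ⟨evMap g α.1 α.2.2 (t j), evMap_mem_Vc α.2 (ht j)⟩
  have hα : ∑ j, vE f g (v j) ⟨β j, hβ j⟩ = α := by
    ext x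
    simp only [AddSubgroup.val_finsetSum, AddMonoidHom.finsetSum_apply]
    exact (apply_eq_sum_evMap_mul g β t hqb α.1 α.2.2 x).symm
  calc smashPsi hβ t (smashPhi f g (BT.mk _ _ a α))
      = ∑ j, BT.mk _ _ (a * v j) ⟨β j, hβ j⟩ :=
        Finset.sum_congr rfl fun j _ => congrArg (BT.mk _ _ · _) (evMap_smashPhi_mk a α (t j))
    _ = ∑ j, BT.mk _ _ a (vE f g (v j) ⟨β j, hβ j⟩) :=
        Finset.sum_congr rfl fun j _ => BT.mk_bal (v j) a _
    _ = BT.mk _ _ a α := by rw [← BT.mk_sum_right, hα]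

end SmashInverse

/-- Let `A|B|C` be a left depth three tower with left D3
quasibases `β_j ∈ End_C A_B`, `t_j ∈ (A ⊗_B A)^C` satisfying
`x ⊗_B y = ∑ j t_j β_j(x) y`.  Then `a ⊗ α ↦ λ_a ∘ α` is an isomorphism of
abelian groups `A ⊗_V End_C A_B ≅ End A_B`, with inverse
`F ↦ ∑ j F(t_j¹) t_j² ⊗_V β_j`. -/
theorem smash_product_endomorphism_ring {C B A : Type*} [Ring C] [Ring B] [Ring A]
    (f : C →+* B) (g : B →+* A) (n : ℕ) (β : Fin n → (A →+ A)) (t : Fin n → Tsr g)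
    (hβ : ∀ j, β j ∈ ECBsub f g) (ht : ∀ j, TCent g (g.comp f) (t j))
    (hqb : ∀ x y : A, tmk g x y = ∑ j, rmul g (β j x * y) (t j)) :
    Function.Bijective ⇑(smashPhi f g) ∧
    ∀ F : ↥(EBsub g),
      smashPhi f g (∑ j, BT.mk _ _ (evMap g F.1 F.2 (t j))
        (⟨β j, hβ j⟩ : ↥(ECBsub f g))) = F := by
  have hleft := smashPsi_smashPhi hβ t ht hqb
  have hright := smashPhi_smashPsi hβ t hqb
  exact ⟨Function.bijective_iff_has_inverse.2 ⟨smashPsi hβ t, hleft, hright⟩, hright⟩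
end

section
/- Let A|B be a ring extension such that A is left depth two over B (take C = B, so 𝒮 = End_B A_B with quasibases) and suppose the right module A_B is balanced, i.e., End_{End A_B} A = ρ(B). Then the invariant subring A^𝒮 = {x ∈ A : α(x) = α(1)x for all α ∈ 𝒮} equals (the image in A of) B. -/
open scoped BigOperators

open Tsr

/-! For `x ∈ A^𝒮` the quasibase expansion gives
`x ⊗_B 1 = Σ_j t_j β_j(x) = Σ_j t_j β_j(1) x = 1 ⊗_B x`. Applying `u ⊗_B v ↦ F(u) v` to
`a x ⊗_B 1 = a ⊗_B x` shows that right multiplication by `x` commutes with every `F ∈ End A_B`,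
so by balance it is right multiplication by some `b ∈ B`; evaluating at `1` gives `x = b`. -/

namespace Tsr

variable {B A : Type*} [Ring B] [Ring A] {g : B →+* A}

def liftMul (F : A →+ A) (hF : ∀ (x : A) (b : B), F (x * g b) = F x * g b) : Tsr g →+ A :=
  tlift g (fun u v => F u * v) (fun u u' v => by rw [map_add, add_mul])
    (fun u v v' => by rw [mul_add]) (fun u b v => by rw [hF, mul_assoc])

@[simp] lemma liftMul_tmk (F : A →+ A) (hF : ∀ (x : A) (b : B), F (x * g b) = F x * g b)
    (u v : A) : liftMul F hF (tmk g u v) = F u * v :=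
  tlift_mk g _ _ _ _ u v

lemma tmk_one_comm_of_forall_map_eq_map_one_mul {n : ℕ} {β : Fin n → (A →+ A)}
    {t : Fin n → Tsr g} (hqb : ∀ x y : A, tmk g x y = ∑ j, rmul g (β j x * y) (t j)) {x : A}
    (hx : ∀ j, β j x = β j 1 * x) : tmk g x 1 = tmk g 1 x := by
  simp only [hqb, mul_one, hx]

lemma tmk_mul_one_of_tmk_one_comm {x : A} (hx : tmk g x 1 = tmk g 1 x) (a : A) :
    tmk g (a * x) 1 = tmk g a x := by
  simpa using congr_arg (lmul g a) hx

lemma map_mul_of_tmk_one_comm {x : A} (hx : tmk g x 1 = tmk g 1 x) (F : A →+ A)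
    (hF : ∀ (y : A) (b : B), F (y * g b) = F y * g b) (a : A) : F (a * x) = F a * x := by
  simpa using congr_arg (liftMul F hF) (tmk_mul_one_of_tmk_one_comm hx a)

end Tsr

theorem invariants_eq_base_of_balanced_general {B A : Type*} [Ring B] [Ring A]
    (g : B →+* A) (n : ℕ) (β : Fin n → (A →+ A)) (t : Fin n → Tsr g)
    (hβ : ∀ j, (∀ (b : B) (x : A), β j (g b * x) = g b * β j x) ∧
          ∀ (x : A) (b : B), β j (x * g b) = β j x * g b)
    (hqb : ∀ x y : A, tmk g x y = ∑ j, rmul g (β j x * y) (t j))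
    (hbal : ∀ G : A →+ A,
      (∀ F : A →+ A, (∀ (x : A) (b : B), F (x * g b) = F x * g b) →
        ∀ a : A, G (F a) = F (G a)) →
      ∃ b : B, G = AddMonoidHom.mulRight (g b)) :
    {x : A | ∀ α : A →+ A,
        ((∀ (b : B) (y : A), α (g b * y) = g b * α y) ∧
         ∀ (y : A) (b : B), α (y * g b) = α y * g b) → α x = α 1 * x}
      = Set.range ⇑g := by
  ext x
  refine ⟨fun hx => ?_, ?_⟩
  · have hcomm : tmk g x 1 = tmk g 1 x :=
      tmk_one_comm_of_forall_map_eq_map_one_mul hqb fun j => hx (β j) (hβ j)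
    obtain ⟨b, hb⟩ := hbal (AddMonoidHom.mulRight x) fun F hF a =>
      (map_mul_of_tmk_one_comm hcomm F hF a).symm
    exact ⟨b, by simpa using (DFunLike.congr_fun hb 1).symm⟩
  · rintro ⟨b, rfl⟩ α hα
    simpa using hα.2 1 b

/-- Let `A|B` be a left depth two ring extension (with left D2
quasibases `β_j ∈ End_B A_B` and `t_j ∈ (A ⊗_B A)^B`) such that the right module
`A_B` is balanced.  Then the invariant subring
`A^𝒮 = {x ∈ A : α(x) = α(1) x for all α ∈ 𝒮 = End_B A_B}` equals the image of `B`. -/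
theorem invariants_eq_base_of_balanced {B A : Type*} [Ring B] [Ring A]
    (g : B →+* A) (n : ℕ) (β : Fin n → (A →+ A)) (t : Fin n → Tsr g)
    (hβ : ∀ j, (∀ (b : B) (x : A), β j (g b * x) = g b * β j x) ∧
          ∀ (x : A) (b : B), β j (x * g b) = β j x * g b)
    (ht : ∀ j, ∀ b : B, lmul g (g b) (t j) = rmul g (g b) (t j))
    (hqb : ∀ x y : A, tmk g x y = ∑ j, rmul g (β j x * y) (t j))
    (hbal : ∀ G : A →+ A,
      (∀ F : A →+ A, (∀ (x : A) (b : B), F (x * g b) = F x * g b) →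
        ∀ a : A, G (F a) = F (G a)) →
      ∃ b : B, G = AddMonoidHom.mulRight (g b)) :
    {x : A | ∀ α : A →+ A,
        ((∀ (b : B) (y : A), α (g b * y) = g b * α y) ∧
         ∀ (y : A) (b : B), α (y * g b) = α y * g b) → α x = α 1 * x}
      = Set.range ⇑g :=
  invariants_eq_base_of_balanced_general g n β t hβ hqb hbal
end

section
/- Let (A, D) be an augmented ring, i.e., a ring A with a ring homomorphism π : A → D into a division ring D. Let s_1, ..., s_n be additive endomorphisms of A, and suppose r_1, ..., r_m lie in the left A-span A s_1 + ... + A s_n (inside End_ℤ A, where a·s means λ_a ∘ s), and there exist e_1, ..., e_m ∈ A with r_i(e_k) = δ_{ik} 1_A. Then m ≤ n. -/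
open scoped BigOperators

/-- Let `(A, D)` be an augmented ring, i.e. a ring `A` with a ring
homomorphism `π : A → D` into a division ring `D`.  Let `s_1, …, s_n` be additive
endomorphisms of `A`, suppose `r_1, …, r_m` lie in the left `A`-span
`A s_1 + ⋯ + A s_n` (inside `End_ℤ A`, where `a · s = λ_a ∘ s`), and suppose there
are `e_1, …, e_m ∈ A` with `r_i (e_k) = δ_{ik} 1_A`.  Then `m ≤ n`. -/
theorem augmented_ring_span_card_le {A D : Type*} [Ring A] [DivisionRing D] (π : A →+* D)
    (n m : ℕ) (s : Fin n → (A →+ A)) (r : Fin m → (A →+ A))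
    (hr : ∀ i : Fin m, ∃ a : Fin n → A,
      r i = ∑ j : Fin n, (AddMonoidHom.mulLeft (a j)).comp (s j))
    (e : Fin m → A)
    (he : ∀ i k : Fin m, r i (e k) = if i = k then (1 : A) else 0) :
    m ≤ n := by
  choose a ha using hr
  set M : Fin m → Fin n → D := fun i j => π (a i j) with hM
  set N : Fin n → Fin m → D := fun j k => π (s j (e k)) with hN
  have hMN : ∀ i k, (∑ j, M i j * N j k) = if i = k then (1 : D) else 0 := by
    intro i k
    have h1 : r i (e k) = ∑ j, a i j * s j (e k) := by
      rw [ha i]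
      simp [AddMonoidHom.finset_sum_apply]
    have h2 : π (r i (e k)) = ∑ j, M i j * N j k := by
      rw [h1, map_sum]
      simp [hM, hN]
    rw [← h2, he i k]
    split <;> simp
  let f : (Fin m → D) →ₗ[D] (Fin n → D) :=
    { toFun := fun x j => ∑ i, x i * M i j
      map_add' := by
        intro x y
        funext j
        simp [add_mul, Finset.sum_add_distrib]
      map_smul' := by
        intro c x
        funext j
        simp [Finset.mul_sum, mul_assoc, smul_eq_mul] }
  have hf : Function.Injective f := by
    rw [← LinearMap.ker_eq_bot, LinearMap.ker_eq_bot']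
    intro x hx
    funext k
    have hxj : ∀ j, (∑ i, x i * M i j) = 0 := by
      intro j
      have := congrFun hx j
      simpa [f] using this
    have key : (∑ j, (∑ i, x i * M i j) * N j k) = x k := by
      simp only [Finset.sum_mul, mul_assoc]
      rw [Finset.sum_comm]
      have h3 : ∀ i, (∑ j, x i * (M i j * N j k)) = x i * (if i = k then (1:D) else 0) := by
        intro i
        rw [← Finset.mul_sum, hMN i k]
      simp only [h3]
      simp
    rw [← key]
    simp [hxj]
  have := LinearMap.finrank_le_finrank_of_injective hf
  simpa using this
end
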